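/- Let M ≥ 1 and N ≥ 1 be integers, α > 2/M, a_{j,k} := j + ik for (j,k) ∈ ℤ_N² := {(j,k) ∈ ℤ² : |j| ≥ N, |k| ≥ N}, and 0 < b_{j,k} ≤ |a_{j,k}|^{-α} with ∑_{(j,k) ∈ ℤ_N²} |a_{j,k}|^{-αM} ≤ 2^{-(M+1)}. Let f(z) = ∑_{(j,k) ∈ ℤ_N²} (b_{j,k}/(z − a_{j,k}))^M. Then for every (j,k) ∈ ℤ_N² and every z ∈ D(a_{j,k}, b_{j,k}) ∖ {a_{j,k}} one has |f'(z)| ≥ M((√2·N)^α − 1) > 0; in particular f has no critical points in the disks D(a_{j,k}, b_{j,k}). -/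

import Mathlib

open Filter Topology Set Metric
open scoped ENNReal

noncomputable section

namespace Paper

/-- Riemann sphere as one-point compactification of ℂ. -/
local notation "ℂ∞" => OnePoint ℂ

open Classical in
/-- The self-map of the Riemann sphere induced by `f : ℂ → ℂ` with pole set `P`:
poles and `∞` are sent to `∞`. -/
def sphereMap (f : ℂ → ℂ) (P : Set ℂ) : ℂ∞ → ℂ∞ :=
  fun z => Option.elim' OnePoint.infty
    (fun w => if w ∈ P then OnePoint.infty else ((f w : ℂ) : ℂ∞)) z

/-- The "norm" on the Riemann sphere, valued in `ℝ≥0∞`, with `∞ ↦ ⊤`. -/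
def sphNorm : ℂ∞ → ℝ≥0∞ :=
  fun z => Option.elim' ⊤ (fun w : ℂ => (‖w‖₊ : ℝ≥0∞)) z

/-- The escaping set `I(f)` of the sphere map `F`. -/
def escapingSet (F : ℂ∞ → ℂ∞) : Set ℂ :=
  {z : ℂ | Tendsto (fun n : ℕ => F^[n] (z : ℂ∞)) atTop (𝓝 (OnePoint.infty))}

/-- The set `I_R(f) = {z : liminf |F^n(z)| ≥ R}`. -/
def escapingSetGe (F : ℂ∞ → ℂ∞) (R : ℝ) : Set ℂ :=
  {z : ℂ | ENNReal.ofReal R ≤ Filter.liminf (fun n : ℕ => sphNorm (F^[n] (z : ℂ∞))) atTop}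

/-- The finite critical values of `f`. -/
def critValues (f : ℂ → ℂ) : Set ℂ :=
  {w : ℂ | ∃ c : ℂ, AnalyticAt ℂ f c ∧ deriv f c = 0 ∧ f c = w}

/-- Asymptotic values (on the sphere) of the sphere map `F`. -/
def asymValues (F : ℂ∞ → ℂ∞) : Set ℂ∞ :=
  {w : ℂ∞ | ∃ γ : ℝ → ℂ, Continuous γ ∧ Tendsto (fun t => ‖γ t‖) atTop atTop ∧
    Tendsto (fun t => F ((γ t : ℂ) : ℂ∞)) atTop (𝓝 w)}

/-- The singular set `S(f)`: finite critical values and finite asymptotic values. -/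
def singularSet (f : ℂ → ℂ) (P : Set ℂ) : Set ℂ :=
  critValues f ∪ {w : ℂ | ((w : ℂ) : ℂ∞) ∈ asymValues (sphereMap f P)}

/-- `f` is of class `B`: bounded singular set. -/
def ClassB (f : ℂ → ℂ) (P : Set ℂ) : Prop :=
  Bornology.IsBounded (singularSet f P)

/-- `∞` is not an asymptotic value of `f`. -/
def InftyNotAsym (f : ℂ → ℂ) (P : Set ℂ) : Prop :=
  OnePoint.infty ∉ asymValues (sphereMap f P)

/-- `f` is a meromorphic function on `ℂ` whose poles are exactly the (injectively enumerated)
points `a j`, the pole `a j` having order `m j ≥ 1` and coefficient `b j ≠ 0`,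
i.e. `(z - a j) ^ (m j) * f z → (b j) ^ (m j)` as `z → a j`.  Since there are infinitely many
poles, any such `f` is transcendental. -/
structure MeroData (f : ℂ → ℂ) (a : ℕ → ℂ) (m : ℕ → ℕ) (b : ℕ → ℂ) : Prop where
  inj : Function.Injective a
  analyticOff : ∀ z ∉ Set.range a, AnalyticAt ℂ f z
  mpos : ∀ j, 1 ≤ m j
  bne : ∀ j, b j ≠ 0
  blim : ∀ j, Tendsto (fun z : ℂ => (z - a j) ^ (m j) * f z) (𝓝[≠] (a j)) (𝓝 ((b j) ^ (m j)))

/-- The critical exponent of the series `∑_j (c j) ^ t`: the infimum of the set of `t ≥ 0`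
for which the series converges (`∞` if this set is empty). -/
def critExp {ι : Type*} (c : ι → ℝ) : ℝ≥0∞ :=
  sInf (ENNReal.ofReal '' {t : ℝ | 0 ≤ t ∧ Summable (fun j : ι => c j ^ t)})

/-- The component `U_j(R)` of `f⁻¹({|w| > R})` containing the pole `p`. -/
def poleComponent (f : ℂ → ℂ) (P : Set ℂ) (R : ℝ) (p : ℂ) : Set ℂ :=
  connectedComponentIn {z : ℂ | ENNReal.ofReal R < sphNorm (sphereMap f P (z : ℂ∞))} p

/-- Points of the escaping set whose orbit eventually stays in `U ⊆ ℂ`. -/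
def escapesThrough (f : ℂ → ℂ) (P : Set ℂ) (U : Set ℂ) : Set ℂ :=
  {z ∈ escapingSet (sphereMap f P) |
    ∃ N : ℕ, 1 ≤ N ∧ ∀ n ≥ N, ∃ w ∈ U, (sphereMap f P)^[n] (z : ℂ∞) = ((w : ℂ) : ℂ∞)}

end Paper

namespace Paper

/-- Index set `ℤ_N² = {(j,k) : |j|,|k| ≥ N}`. -/
def ZN (N : ℕ) : Type := {p : ℤ × ℤ // N ≤ p.1.natAbs ∧ N ≤ p.2.natAbs}

/-- The lattice point `a_{j,k} = j + i k`. -/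
def latA {N : ℕ} (p : ZN N) : ℂ := (p.1.1 : ℂ) + (p.1.2 : ℂ) * Complex.I

/-- The set of poles `{a_{j,k}}`. -/
def latPoles (N : ℕ) : Set ℂ := Set.range (latA (N := N))

/-- The function `f(z) = ∑_{(j,k) ∈ ℤ_N²} (b_{j,k}/(z - a_{j,k}))^M`. -/
def latF (N M : ℕ) (bc : ZN N → ℝ) (z : ℂ) : ℂ :=
  ∑' p : ZN N, ((bc p : ℂ) / (z - latA p)) ^ M

end Paper

/-! On the punctured disk around `a_p` the derivative is `-M ∑ b_q^M / (z - a_q)^(M+1)`.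
The term `q = p` has modulus `M b_p^M / |z - a_p|^(M+1) ≥ M / b_p ≥ M |a_p|^α ≥ M (√2 N)^α`.
Since `b_p ≤ 1/2` and distinct lattice points are at distance `≥ 1`, `z` stays at distance
`≥ 1/2` from every other pole, so the remaining terms add up to at most
`M 2^(M+1) ∑ b_q^M ≤ M`. -/

namespace Paper

theorem norm_sub_tsum_le_norm_tsum {ι E : Type*} [NormedAddCommGroup E] [CompleteSpace E]
    {f : ι → E} {g : ι → ℝ} (hg : Summable g) (hg0 : ∀ q, 0 ≤ g q) (p : ι)
    (hfg : ∀ q ≠ p, ‖f q‖ ≤ g q) : ‖f p‖ - ∑' q, g q ≤ ‖∑' q, f q‖ := by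
  classical
  have hf : Summable f := hg.of_norm_bounded_eventually <| Filter.eventually_cofinite.2 <|
    (Set.finite_singleton p).subset fun q hq => by_contra fun hqp => hq (hfg q hqp)
  have htail : ‖∑' q, if q = p then 0 else f q‖ ≤ ∑' q, g q := by
    refine tsum_of_norm_bounded hg.hasSum fun q => ?_
    split_ifs with hqp
    · simpa using hg0 q
    · exact hfg q hqp
  have h := norm_sub_le (f p + ∑' q, if q = p then 0 else f q) (∑' q, if q = p then 0 else f q)
  rw [add_sub_cancel_right] at h
  rw [hf.tsum_eq_add_tsum_ite p]
  linarith

theorem hasDerivAt_div_sub_pow (c a : ℂ) (M : ℕ) {w : ℂ} (hw : w ≠ a) :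
    HasDerivAt (fun w => c / (w - a) ^ M) (-(M * c / (w - a) ^ (M + 1))) w := by
  have h := (((hasDerivAt_zpow (-(M : ℤ)) (w - a) (.inl (sub_ne_zero.2 hw))).comp_sub_const
    w a).const_mul c)
  have hform : (fun w => c / (w - a) ^ M) = fun w => c * (w - a) ^ (-(M : ℤ)) := by
    funext w
    simp [div_eq_mul_inv, zpow_neg]
  rw [hform]
  refine h.congr_deriv ?_
  rw [show -(M : ℤ) - 1 = -((M + 1 : ℕ) : ℤ) by push_cast; ring, zpow_neg, zpow_natCast]
  push_cast
  ring

theorem norm_div_pow_le {c x : ℂ} {r : ℝ} (hr : 0 < r) (hx : r ≤ ‖x‖) (n : ℕ) :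
    ‖c / x ^ n‖ ≤ ‖c‖ / r ^ n := by
  rw [norm_div, norm_pow]
  gcongr

theorem hasDerivAt_tsum_div_sub_pow {ι : Type*} {a c : ι → ℂ} (hc : Summable (‖c ·‖)) (M : ℕ)
    {z : ℂ} {r : ℝ} (hr : 0 < r) (hz : ∀ q, r ≤ ‖z - a q‖) :
    HasDerivAt (fun w => ∑' q, c q / (w - a q) ^ M)
      (∑' q, -(M * c q / (z - a q) ^ (M + 1))) z := by
  have hball : ∀ q, ∀ w ∈ Metric.ball z (r / 2), r / 2 ≤ ‖w - a q‖ := by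
    intro q w hw
    have hzw : ‖z - w‖ < r / 2 := by rw [← dist_eq_norm, dist_comm]; exact Metric.mem_ball.1 hw
    linarith [hz q, norm_sub_le_norm_sub_add_norm_sub z w (a q)]
  have hu : Summable fun q => M * ‖c q‖ / (r / 2) ^ (M + 1) := (hc.mul_left (M : ℝ)).div_const _
  have hz0 : z ∈ Metric.ball z (r / 2) := Metric.mem_ball_self (half_pos hr)
  have hne : ∀ q, ∀ w ∈ Metric.ball z (r / 2), w ≠ a q := fun q w hw =>
    sub_ne_zero.1 (norm_pos_iff.1 ((half_pos hr).trans_le (hball q w hw)))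
  have hbound : ∀ q, ∀ w ∈ Metric.ball z (r / 2),
      ‖-(M * c q / (w - a q) ^ (M + 1))‖ ≤ M * ‖c q‖ / (r / 2) ^ (M + 1) := by
    intro q w hw
    have h := norm_div_pow_le (c := M * c q) (half_pos hr) (hball q w hw) (M + 1)
    rw [norm_neg]
    rwa [norm_mul, Complex.norm_natCast] at h
  have hsum : Summable fun q => c q / (z - a q) ^ M :=
    (hc.div_const (r ^ M)).of_norm_bounded fun q => norm_div_pow_le hr (hz q) M
  exact hasDerivAt_tsum_of_isPreconnected hu Metric.isOpen_ball
    (convex_ball z _).isPreconnected (fun q w hw => hasDerivAt_div_sub_pow _ _ M (hne q w hw))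
    hbound hz0 hsum hz0

theorem pow_le_rpow_neg_mul {b x α : ℝ} (hb : 0 ≤ b) (hx : 0 ≤ x) (hbx : b ≤ x ^ (-α)) (M : ℕ) :
    b ^ M ≤ x ^ (-(α * M)) :=
  calc b ^ M ≤ (x ^ (-α)) ^ M := pow_le_pow_left₀ hb hbx M
    _ = x ^ (-(α * M)) := by rw [← Real.rpow_natCast, ← Real.rpow_mul hx, neg_mul]

theorem le_half_of_pow_le {b : ℝ} {M : ℕ} (hM : M ≠ 0)
    (h : b ^ M ≤ 1 / 2 ^ (M + 1)) : b ≤ 1 / 2 := by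
  refine le_of_pow_le_pow_left₀ hM (by norm_num) (h.trans ?_)
  rw [one_div_pow]
  gcongr
  · norm_num
  · omega

theorem rpow_le_pow_div_pow_succ {x α b d : ℝ} (hx : 0 ≤ x) (hd : 0 < d) (hdb : d ≤ b)
    (hb : b ≤ x ^ (-α)) (M : ℕ) : x ^ α ≤ b ^ M / d ^ (M + 1) := by
  have hb0 : 0 < b := hd.trans_le hdb
  rw [Real.rpow_neg hx] at hb
  have hxα : 0 < x ^ α := inv_pos.1 (hb0.trans_le hb)
  calc x ^ α ≤ b⁻¹ := (le_inv_comm₀ hb0 hxα).1 hb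
    _ = b ^ M / b ^ (M + 1) := by field_simp; ring
    _ ≤ b ^ M / d ^ (M + 1) := by gcongr

theorem one_lt_sqrt_two_mul {N : ℕ} (hN : 1 ≤ N) : 1 < √2 * N :=
  one_lt_mul_of_lt_of_le Real.one_lt_sqrt_two (by exact_mod_cast hN)

section Lattice

variable {N M : ℕ}

theorem sqrt_two_mul_le_norm_latA (p : ZN N) : √2 * N ≤ ‖latA p‖ := by
  obtain ⟨⟨j, k⟩, hj, hk⟩ := p
  have hsq : ∀ n : ℤ, N ≤ n.natAbs → (N : ℝ) ^ 2 ≤ (n : ℝ) ^ 2 := fun n hn =>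
    sq_le_sq.2 <| by
      rw [abs_of_nonneg N.cast_nonneg, ← Int.cast_abs, ← Nat.cast_natAbs]
      exact_mod_cast hn
  have hnorm : ‖latA ⟨(j, k), hj, hk⟩‖ = √((j : ℝ) ^ 2 + (k : ℝ) ^ 2) := by
    rw [← Complex.norm_add_mul_I]
    simp [latA]
  rw [hnorm, ← Real.sqrt_sq (by positivity : (0 : ℝ) ≤ N), ← Real.sqrt_mul zero_le_two]
  exact Real.sqrt_le_sqrt (by linarith [hsq j hj, hsq k hk])

theorem one_le_norm_latA_sub {p q : ZN N} (h : p ≠ q) : 1 ≤ ‖latA p - latA q‖ := by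
  have hre : (latA p - latA q).re = ((p.1.1 - q.1.1 : ℤ) : ℝ) := by simp [latA]
  have him : (latA p - latA q).im = ((p.1.2 - q.1.2 : ℤ) : ℝ) := by simp [latA]
  by_cases hj : p.1.1 = q.1.1
  · have hk : p.1.2 - q.1.2 ≠ 0 := sub_ne_zero.2 fun hk => h (Subtype.ext (Prod.ext hj hk))
    calc (1 : ℝ) ≤ |((p.1.2 - q.1.2 : ℤ) : ℝ)| := by exact_mod_cast Int.one_le_abs hk
      _ ≤ ‖latA p - latA q‖ := him ▸ Complex.abs_im_le_norm _
  · calc (1 : ℝ) ≤ |((p.1.1 - q.1.1 : ℤ) : ℝ)| := by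
          exact_mod_cast Int.one_le_abs (sub_ne_zero.2 hj)
      _ ≤ ‖latA p - latA q‖ := hre ▸ Complex.abs_re_le_norm _

theorem hasDerivAt_latF {bc : ZN N → ℝ} (hb : ∀ q, 0 ≤ bc q) (hsum : Summable fun q => bc q ^ M)
    {z : ℂ} {r : ℝ} (hr : 0 < r) (hz : ∀ q : ZN N, r ≤ ‖z - latA q‖) :
    HasDerivAt (latF N M bc) (∑' q : ZN N, -(M * (bc q : ℂ) ^ M / (z - latA q) ^ (M + 1))) z := by
  have hform : latF N M bc = fun w => ∑' q, (bc q : ℂ) ^ M / (w - latA q) ^ M := by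
    funext w
    simp only [latF, div_pow]
  rw [hform]
  refine hasDerivAt_tsum_div_sub_pow (hsum.congr fun q => ?_) M hr hz
  rw [norm_pow, Complex.norm_real, Real.norm_of_nonneg (hb q)]

theorem norm_deriv_latF_ge {α : ℝ} {bc : ZN N → ℝ} (hM : M ≠ 0) (hα : 0 ≤ α)
    (hbc : ∀ p : ZN N, 0 < bc p ∧ bc p ≤ ‖latA p‖ ^ (-α))
    (hsum : Summable fun q => bc q ^ M) (htsum : ∑' q, bc q ^ M ≤ 1 / 2 ^ (M + 1))
    {p : ZN N} {z : ℂ} (hz : z ∈ Metric.ball (latA p) (bc p) \ {latA p}) :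
    (M : ℝ) * ((√2 * N) ^ α - 1) ≤ ‖deriv (latF N M bc) z‖ := by
  obtain ⟨hzb, hzp⟩ := hz
  set d := ‖z - latA p‖
  have hd0 : 0 < d := norm_sub_pos_iff.2 hzp
  have hdb : d < bc p := by rwa [Metric.mem_ball, dist_eq_norm] at hzb
  have hdhalf : d ≤ 1 / 2 := hdb.le.trans <| le_half_of_pow_le hM <|
    (hsum.le_tsum p fun q _ => pow_nonneg (hbc q).1.le M).trans htsum
  have hfar : ∀ q ≠ p, 1 / 2 ≤ ‖z - latA q‖ := fun q hq => by
    linarith [one_le_norm_latA_sub (Ne.symm hq), norm_sub_rev z (latA p),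
      norm_sub_le_norm_sub_add_norm_sub (latA p) z (latA q)]
  have hnear : ∀ q : ZN N, d ≤ ‖z - latA q‖ := by
    intro q
    rcases eq_or_ne q p with rfl | hq
    exacts [le_rfl, hdhalf.trans (hfar q hq)]
  rw [(hasDerivAt_latF (fun q => (hbc q).1.le) hsum hd0 hnear).deriv]
  have hmain : (M : ℝ) * (√2 * N) ^ α ≤ ‖-(M * (bc p : ℂ) ^ M / (z - latA p) ^ (M + 1))‖ := by
    rw [norm_neg, norm_div, norm_mul, norm_pow, norm_pow, Complex.norm_natCast, Complex.norm_real,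
      Real.norm_of_nonneg (hbc p).1.le, mul_div_assoc]
    gcongr
    exact (Real.rpow_le_rpow (by positivity) (sqrt_two_mul_le_norm_latA p) hα).trans
      (rpow_le_pow_div_pow_succ (norm_nonneg _) hd0 hdb.le (hbc p).2 M)
  have htail := norm_sub_tsum_le_norm_tsum
    (f := fun q => -(M * (bc q : ℂ) ^ M / (z - latA q) ^ (M + 1)))
    (g := fun q => M * bc q ^ M / (1 / 2) ^ (M + 1))
    ((hsum.mul_left (M : ℝ)).div_const _) (fun q => by have := (hbc q).1; positivity) p
    fun q hq => by
      have h := norm_div_pow_le (c := M * (bc q : ℂ) ^ M) (by norm_num) (hfar q hq) (M + 1)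
      rwa [norm_mul, norm_pow, Complex.norm_natCast, Complex.norm_real,
        Real.norm_of_nonneg (hbc q).1.le, ← norm_neg] at h
  have htail_le : ∑' q, (M : ℝ) * bc q ^ M / (1 / 2) ^ (M + 1) ≤ M := by
    rw [tsum_div_const, tsum_mul_left, div_le_iff₀ (by positivity), one_div_pow]
    exact mul_le_mul_of_nonneg_left htsum M.cast_nonneg
  linarith

end Lattice

/-- **Claim 7.2**: on each punctured disk `D(a_{j,k}, b_{j,k}) ∖ {a_{j,k}}` one has
`|f'(z)| ≥ M((√2·N)^α − 1) > 0`; in particular `f` has no critical points in these disks. -/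
theorem lattice_derivative_lower_bound (M N : ℕ) (hM : 1 ≤ M) (hN : 1 ≤ N) (α : ℝ)
    (hα : 2 / (M : ℝ) < α)
    (bc : ZN N → ℝ)
    (hbc : ∀ p : ZN N, 0 < bc p ∧ bc p ≤ ‖latA p‖ ^ (-α))
    (hsum : Summable (fun p : ZN N => ‖latA p‖ ^ (-(α * M))))
    (hbound : (∑' p : ZN N, ‖latA p‖ ^ (-(α * M))) ≤ 1 / 2 ^ (M + 1)) :
    0 < (M : ℝ) * ((Real.sqrt 2 * N) ^ α - 1)
      ∧ ∀ p : ZN N, ∀ z ∈ Metric.ball (latA p) (bc p) \ {latA p},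
          (M : ℝ) * ((Real.sqrt 2 * N) ^ α - 1) ≤ ‖deriv (latF N M bc) z‖
          ∧ deriv (latF N M bc) z ≠ 0 := by
  have hMpos : (0 : ℝ) < M := by exact_mod_cast hM
  have hα0 : 0 < α := (div_pos two_pos hMpos).trans hα
  have hbM : ∀ q, bc q ^ M ≤ ‖latA q‖ ^ (-(α * M)) := fun q =>
    pow_le_rpow_neg_mul (hbc q).1.le (norm_nonneg _) (hbc q).2 M
  have hsumM : Summable fun q => bc q ^ M :=
    hsum.of_nonneg_of_le (fun q => pow_nonneg (hbc q).1.le M) hbM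
  have htsumM : ∑' q, bc q ^ M ≤ 1 / 2 ^ (M + 1) := (hsumM.tsum_le_tsum hbM hsum).trans hbound
  have hpos : 0 < (M : ℝ) * ((Real.sqrt 2 * N) ^ α - 1) :=
    mul_pos hMpos (sub_pos.2 (Real.one_lt_rpow (one_lt_sqrt_two_mul hN) hα0))
  refine ⟨hpos, fun p z hz => ?_⟩
  have hlow := norm_deriv_latF_ge (by omega) hα0.le hbc hsumM htsumM hz
  exact ⟨hlow, fun h0 => by rw [h0, norm_zero] at hlow; linarith⟩

end Paper
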